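/- arXiv:1411.7839 — 2 statements merged into one kernel-verified Lean document; each statement's English description precedes it below -/
import Mathlib

section
/- For a deterministic small-step operational semantics →_B on states (Store × Stm), define S₁ ≈_ρ S₂ iff there exists a bisimulation R ⊆ Store × Stm × Stm with R(ρ,S₁,S₂). Then S₁ ≈_ρ S₂ if and only if α^ρ_sch(T(S₁)) = α^ρ_sch(T(S₂)), where α^ρ_sch(X) := {sch(τ) | τ ∈ X, τ starts in a state with store ρ}. -/
/-- A silent step: a transition that does not change the store. -/
def Sil {Store Stm : Type*} (B : Store × Stm → Store × Stm → Prop)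
    (s s' : Store × Stm) : Prop :=
  B s s' ∧ s.1 = s'.1

/-- The weak transition ⟨ρ,S⟩ ⇒^â ⟨ρ',S'⟩: if the store is unchanged (â = ε),
any number of silent steps; otherwise silent steps, one store-changing step,
and silent steps. -/
def Weak {Store Stm : Type*} (B : Store × Stm → Store × Stm → Prop)
    (s s' : Store × Stm) : Prop :=
  (s.1 = s'.1 ∧ Relation.ReflTransGen (Sil B) s s') ∨
  (s.1 ≠ s'.1 ∧ ∃ u v : Store × Stm,
    Relation.ReflTransGen (Sil B) s u ∧ B u v ∧
    Relation.ReflTransGen (Sil B) v s')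

/-- R is a bisimulation when every step of one side is matched by a weak
transition of the other side with the same store change, re-establishing R. -/
def IsBisim {Store Stm : Type*} (B : Store × Stm → Store × Stm → Prop)
    (R : Store → Stm → Stm → Prop) : Prop :=
  ∀ ρ S₁ S₂, R ρ S₁ S₂ →
    (∀ ρ' S₁', B (ρ, S₁) (ρ', S₁') →
      ∃ S₂', Weak B (ρ, S₂) (ρ', S₂') ∧ R ρ' S₁' S₂') ∧
    (∀ ρ' S₂', B (ρ, S₂) (ρ', S₂') →
      ∃ S₁', Weak B (ρ, S₁) (ρ', S₁') ∧ R ρ' S₁' S₂')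

/-- Store changes of a trace: the sequence of stores with consecutive
duplicates collapsed. -/
def sch {Store C : Type*} [DecidableEq Store] : List (Store × C) → List Store
  | [] => []
  | [(ρ, _)] => [ρ]
  | (ρ₀, _) :: (ρ₁, c₁) :: σ =>
    if ρ₀ = ρ₁ then sch ((ρ₁, c₁) :: σ) else ρ₀ :: sch ((ρ₁, c₁) :: σ)

/-- T(S): the set of finite traces of →_B starting from ⟨ρ₀,S⟩ for any store ρ₀. -/
def Traces {Store Stm : Type*} (B : Store × Stm → Store × Stm → Prop)
    (S : Stm) : Set (List (Store × Stm)) :=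
  {τ | τ ≠ [] ∧ (∃ ρ₀ : Store, τ.head? = some (ρ₀, S)) ∧ τ.Chain' B}

/-- α^ρ_sch(X): store-change sequences of the traces in X starting in a state
with store ρ. -/
def alphaSchAt {Store Stm : Type*} [DecidableEq Store] (ρ : Store)
    (X : Set (List (Store × Stm))) : Set (List Store) :=
  {l | ∃ τ ∈ X, (∃ S' : Stm, τ.head? = some (ρ, S')) ∧ sch τ = l}

/-
Replaying a run of `S₁` step by step in a bisimilar `S₂`, every weak move contributes the
same store change, so bisimilar statements have the same store-change sequences. Conversely,
equality of these sets is itself a bisimulation. By determinism a silent step leaves the set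
unchanged, while a step to a new store `ρ'` turns it into `[ρ]` together with `ρ :: l` for the
sequences `l` of the successor; so the successors' sets agree once the other side has a matching
weak move, and that move is read off a run of the other side with store changes `[ρ, ρ']`.
-/

section Sch

variable {Store C : Type*} [DecidableEq Store]

theorem sch_cons_cons (s t : Store × C) (τ : List (Store × C)) :
    sch (s :: t :: τ) = if s.1 = t.1 then sch (t :: τ) else s.1 :: sch (t :: τ) := by
  obtain ⟨a, x⟩ := s
  obtain ⟨b, y⟩ := t
  rfl

theorem head?_sch_cons (s : Store × C) (τ : List (Store × C)) :
    (sch (s :: τ)).head? = some s.1 := by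
  induction τ generalizing s with
  | nil => rfl
  | cons t τ ih =>
    rw [sch_cons_cons]
    split_ifs with h
    · rw [ih, h]
    · rfl

theorem sch_cons_ne_nil (s : Store × C) (τ : List (Store × C)) : sch (s :: τ) ≠ [] := by
  intro h
  simpa [h] using head?_sch_cons s τ

end Sch

section Runs

variable {Store Stm : Type*} {B : Store × Stm → Store × Stm → Prop}

theorem Relation.ReflTransGen.fst_eq_of_sil {s t : Store × Stm}
    (h : Relation.ReflTransGen (Sil B) s t) : s.1 = t.1 := by
  induction h with
  | refl => rfl
  | tail _ hstep ih => exact ih.trans hstep.2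

theorem IsBisim.symm {R : Store → Stm → Stm → Prop} (hR : IsBisim B R) :
    IsBisim B (fun ρ S₁ S₂ => R ρ S₂ S₁) :=
  fun ρ S₁ S₂ h => ⟨(hR ρ S₂ S₁ h).2, (hR ρ S₂ S₁ h).1⟩

end Runs

section StoreChanges

variable {Store Stm : Type*} [DecidableEq Store] {B : Store × Stm → Store × Stm → Prop}

variable (B) in
/-- `α^ρ_sch(T(S))`, as a function of the state `s = ⟨ρ, S⟩`. -/
def storeChanges (s : Store × Stm) : Set (List Store) :=
  alphaSchAt s.1 (Traces B s.2)

theorem mem_storeChanges {s : Store × Stm} {l : List Store} :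
    l ∈ storeChanges B s ↔ ∃ τ, (s :: τ).IsChain B ∧ sch (s :: τ) = l := by
  constructor
  · rintro ⟨_ | ⟨t, τ⟩, ⟨-, ⟨ρ₀, h₀⟩, hchain⟩, ⟨S, h⟩, rfl⟩
    · simp at h
    · obtain rfl : t = s := by
        simp only [List.head?_cons, Option.some.injEq] at h₀ h
        exact Prod.ext (by rw [h]) (by rw [h₀])
      exact ⟨τ, hchain, rfl⟩
  · rintro ⟨τ, hchain, rfl⟩
    exact ⟨s :: τ, ⟨List.cons_ne_nil _ _, ⟨s.1, rfl⟩, hchain⟩, ⟨s.2, rfl⟩, rfl⟩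

theorem mem_storeChanges_iff_step {s : Store × Stm} {l : List Store} :
    l ∈ storeChanges B s ↔ l = [s.1] ∨
      ∃ t, B s t ∧ ∃ l' ∈ storeChanges B t, l = if s.1 = t.1 then l' else s.1 :: l' := by
  simp only [mem_storeChanges]
  constructor
  · rintro ⟨_ | ⟨t, τ⟩, hchain, rfl⟩
    · exact Or.inl rfl
    · rw [List.isChain_cons_cons] at hchain
      exact Or.inr ⟨t, hchain.1, _, ⟨τ, hchain.2, rfl⟩, sch_cons_cons s t τ⟩
  · rintro (rfl | ⟨t, hst, _, ⟨τ, hchain, rfl⟩, rfl⟩)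
    · exact ⟨[], List.isChain_singleton s, rfl⟩
    · exact ⟨t :: τ, List.isChain_cons_cons.2 ⟨hst, hchain⟩, sch_cons_cons s t τ⟩

theorem singleton_mem_storeChanges (s : Store × Stm) : [s.1] ∈ storeChanges B s :=
  mem_storeChanges_iff_step.2 (Or.inl rfl)

theorem ne_nil_of_mem_storeChanges {s : Store × Stm} {l : List Store}
    (hl : l ∈ storeChanges B s) : l ≠ [] := by
  obtain ⟨τ, -, rfl⟩ := mem_storeChanges.1 hl
  exact sch_cons_ne_nil s τ

theorem step_mem_storeChanges {s t : Store × Stm} (hst : B s t) {l : List Store}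
    (hl : l ∈ storeChanges B t) :
    (if s.1 = t.1 then l else s.1 :: l) ∈ storeChanges B s :=
  mem_storeChanges_iff_step.2 (Or.inr ⟨t, hst, l, hl, rfl⟩)

theorem storeChanges_subset_of_silentRun {s t : Store × Stm}
    (h : Relation.ReflTransGen (Sil B) s t) : storeChanges B t ⊆ storeChanges B s := by
  induction h with
  | refl => exact subset_rfl
  | tail _ hstep ih =>
    intro l hl
    have := step_mem_storeChanges hstep.1 hl
    rw [if_pos hstep.2] at this
    exact ih this

theorem weak_mem_storeChanges {s t : Store × Stm} (hst : Weak B s t) {l : List Store}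
    (hl : l ∈ storeChanges B t) :
    (if s.1 = t.1 then l else s.1 :: l) ∈ storeChanges B s := by
  rcases hst with ⟨heq, hrun⟩ | ⟨hne, u, v, hsu, huv, hvt⟩
  · rw [if_pos heq]
    exact storeChanges_subset_of_silentRun hrun hl
  · have := step_mem_storeChanges huv (storeChanges_subset_of_silentRun hvt hl)
    rw [← hsu.fst_eq_of_sil, hvt.fst_eq_of_sil, if_neg hne] at this
    rw [if_neg hne]
    exact storeChanges_subset_of_silentRun hsu this

theorem storeChanges_subset_of_isBisim {R : Store → Stm → Stm → Prop} (hR : IsBisim B R)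
    {ρ : Store} {S₁ S₂ : Stm} (h : R ρ S₁ S₂) :
    storeChanges B (ρ, S₁) ⊆ storeChanges B (ρ, S₂) := by
  intro l hl
  obtain ⟨τ, hchain, rfl⟩ := mem_storeChanges.1 hl
  induction τ generalizing ρ S₁ S₂ with
  | nil => exact singleton_mem_storeChanges _
  | cons t τ ih =>
    obtain ⟨ρ', S₁'⟩ := t
    rw [List.isChain_cons_cons] at hchain
    obtain ⟨S₂', hweak, h'⟩ := (hR ρ S₁ S₂ h).1 ρ' S₁' hchain.1
    rw [sch_cons_cons]
    exact weak_mem_storeChanges hweak (ih h' hchain.2 (mem_storeChanges.2 ⟨τ, hchain.2, rfl⟩))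

theorem exists_silentRun_step_of_pair_mem_storeChanges {s : Store × Stm} {ρ' : Store}
    (h : [s.1, ρ'] ∈ storeChanges B s) :
    ∃ u t, Relation.ReflTransGen (Sil B) s u ∧ B u t ∧ t.1 = ρ' := by
  obtain ⟨τ, hchain, hsch⟩ := mem_storeChanges.1 h
  clear h
  induction τ generalizing s with
  | nil =>
    obtain ⟨ρ, S⟩ := s
    simp [sch] at hsch
  | cons t τ ih =>
    rw [List.isChain_cons_cons] at hchain
    rw [sch_cons_cons] at hsch
    split_ifs at hsch with hst
    · obtain ⟨u, v, hrun, huv, hv⟩ := ih hchain.2 (hst ▸ hsch)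
      exact ⟨u, v, .head ⟨hchain.1, hst⟩ hrun, huv, hv⟩
    · have htail : sch (t :: τ) = [ρ'] := (List.cons.inj hsch).2
      refine ⟨s, t, .refl, hchain.1, ?_⟩
      simpa [htail] using (head?_sch_cons t τ).symm

section Deterministic

variable (hdet : ∀ s t t' : Store × Stm, B s t → B s t' → t = t')
include hdet

theorem mem_storeChanges_iff_of_step {s t : Store × Stm} (hst : B s t) {l : List Store} :
    l ∈ storeChanges B s ↔
      l = [s.1] ∨ ∃ l' ∈ storeChanges B t, l = if s.1 = t.1 then l' else s.1 :: l' := by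
  rw [mem_storeChanges_iff_step]
  constructor
  · rintro (h | ⟨t', hst', h⟩)
    · exact Or.inl h
    · obtain rfl := hdet s t t' hst hst'
      exact Or.inr h
  · rintro (h | h)
    · exact Or.inl h
    · exact Or.inr ⟨t, hst, h⟩

theorem storeChanges_eq_of_sil {s t : Store × Stm} (hst : Sil B s t) :
    storeChanges B s = storeChanges B t := by
  ext l
  simp only [mem_storeChanges_iff_of_step hdet hst.1, if_pos hst.2, exists_eq_right']
  constructor
  · rintro (rfl | hl)
    · exact hst.2 ▸ singleton_mem_storeChanges t
    · exact hl
  · exact Or.inr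

theorem storeChanges_eq_of_silentRun {s t : Store × Stm}
    (h : Relation.ReflTransGen (Sil B) s t) : storeChanges B s = storeChanges B t := by
  induction h with
  | refl => rfl
  | tail _ hstep ih => exact ih.trans (storeChanges_eq_of_sil hdet hstep)

theorem cons_mem_storeChanges_iff {s t : Store × Stm} (hst : B s t) (hne : s.1 ≠ t.1)
    {l : List Store} (hl : l ≠ []) :
    s.1 :: l ∈ storeChanges B s ↔ l ∈ storeChanges B t := by
  simp [mem_storeChanges_iff_of_step hdet hst, hne, hl]

theorem exists_weak_storeChanges_eq {ρ ρ' : Store} {X Y X' : Stm}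
    (h : storeChanges B (ρ, X) = storeChanges B (ρ, Y)) (hB : B (ρ, X) (ρ', X')) :
    ∃ Y', Weak B (ρ, Y) (ρ', Y') ∧ storeChanges B (ρ', X') = storeChanges B (ρ', Y') := by
  by_cases hρ : ρ = ρ'
  · subst hρ
    exact ⟨Y, Or.inl ⟨rfl, .refl⟩, (storeChanges_eq_of_sil hdet ⟨hB, rfl⟩).symm.trans h⟩
  have hpair : [ρ, ρ'] ∈ storeChanges B (ρ, Y) :=
    h ▸ (cons_mem_storeChanges_iff hdet hB hρ (List.cons_ne_nil _ _)).2
      (singleton_mem_storeChanges _)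
  obtain ⟨u, ⟨_, Y'⟩, hrun, hstep, rfl⟩ :=
    exists_silentRun_step_of_pair_mem_storeChanges hpair
  have hu : ρ = u.1 := hrun.fst_eq_of_sil
  refine ⟨Y', Or.inr ⟨hρ, u, _, hrun, hstep, .refl⟩, Set.ext fun l => ?_⟩
  rcases eq_or_ne l [] with rfl | hl
  · exact iff_of_false (ne_nil_of_mem_storeChanges · rfl) (ne_nil_of_mem_storeChanges · rfl)
  rw [← cons_mem_storeChanges_iff hdet hB hρ hl,
    ← cons_mem_storeChanges_iff hdet hstep (hu ▸ hρ) hl, h,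
    storeChanges_eq_of_silentRun hdet hrun, hu]

theorem isBisim_storeChanges_eq :
    IsBisim B (fun ρ S₁ S₂ => storeChanges B (ρ, S₁) = storeChanges B (ρ, S₂)) :=
  fun _ _ _ h => ⟨fun _ _ hB => exists_weak_storeChanges_eq hdet h hB,
    fun _ _ hB => (exists_weak_storeChanges_eq hdet h.symm hB).imp
      fun _ ⟨hw, he⟩ => ⟨hw, he.symm⟩⟩

end Deterministic

end StoreChanges

/-- For a deterministic small-step semantics →_B, two statements are bisimilar at
store ρ iff the store-changes abstractions (restricted to initial store ρ) of
their trace semantics coincide. -/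
theorem bisimilarity_iff_store_changes {Store Stm : Type*} [DecidableEq Store]
    (B : Store × Stm → Store × Stm → Prop)
    (hdet : ∀ s t t' : Store × Stm, B s t → B s t' → t = t')
    (ρ : Store) (S₁ S₂ : Stm) :
    (∃ R : Store → Stm → Stm → Prop, IsBisim B R ∧ R ρ S₁ S₂) ↔
      alphaSchAt ρ (Traces B S₁) = alphaSchAt ρ (Traces B S₂) := by
  constructor
  · rintro ⟨R, hR, h⟩
    exact (storeChanges_subset_of_isBisim hR h).antisymm (storeChanges_subset_of_isBisim hR.symm h)
  · exact fun h => ⟨_, isBisim_storeChanges_eq hdet, h⟩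
end

section
/- The state compile function C^s is a functional bisimulation between Guo–Palsberg's small-step semantics and the compiled program's transition semantics: ⟨ρ,S⟩ →_B ⟨ρ',S'⟩ if and only if C^s(⟨ρ',S'⟩) ∈ S(C^s(⟨ρ,S⟩)), where S is the transition relation of the labeled-command language. -/
/-- Guo–Palsberg statements: sequences of commands in continuation style. -/
inductive Stm (Exp BExp : Type) : Type
  | nil : Stm Exp BExp
  | skipC : Stm Exp BExp → Stm Exp BExp
  | assign : String → Exp → Stm Exp BExp → Stm Exp BExp
  | ite : BExp → Stm Exp BExp → Stm Exp BExp → Stm Exp BExp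
  | whileC : BExp → Stm Exp BExp → Stm Exp BExp → Stm Exp BExp
  | bail : BExp → Stm Exp BExp → Stm Exp BExp → Stm Exp BExp

/-- Concatenation of statements. -/
def Stm.app {Exp BExp : Type} : Stm Exp BExp → Stm Exp BExp → Stm Exp BExp
  | .nil, K => K
  | .skipC K', K => .skipC (K'.app K)
  | .assign x e K', K => .assign x e (K'.app K)
  | .ite b S K', K => .ite b S (K'.app K)
  | .whileC b S K', K => .whileC b S (K'.app K)
  | .bail b S K', K => .bail b S (K'.app K)

/-- The deterministic small-step operational semantics →_B of Guo–Palsberg. -/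
inductive StepB {Val Exp BExp : Type} (eval : Exp → (String → Val) → Val)
    (beval : BExp → (String → Val) → Bool) :
    (String → Val) × Stm Exp BExp → (String → Val) × Stm Exp BExp → Prop
  | skip (ρ : String → Val) (K : Stm Exp BExp) :
      StepB eval beval (ρ, .skipC K) (ρ, K)
  | assign (ρ : String → Val) (x : String) (e : Exp) (K : Stm Exp BExp) :
      StepB eval beval (ρ, .assign x e K) (Function.update ρ x (eval e ρ), K)
  | iteT (ρ : String → Val) (b : BExp) (S K : Stm Exp BExp) :
      beval b ρ = true → StepB eval beval (ρ, .ite b S K) (ρ, S.app K)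
  | iteF (ρ : String → Val) (b : BExp) (S K : Stm Exp BExp) :
      beval b ρ = false → StepB eval beval (ρ, .ite b S K) (ρ, K)
  | whileU (ρ : String → Val) (b : BExp) (S K : Stm Exp BExp) :
      StepB eval beval (ρ, .whileC b S K)
        (ρ, .ite b (S.app (.whileC b S .nil)) K)
  | bailT (ρ : String → Val) (b : BExp) (S K : Stm Exp BExp) :
      beval b ρ = true → StepB eval beval (ρ, .bail b S K) (ρ, S)
  | bailF (ρ : String → Val) (b : BExp) (S K : Stm Exp BExp) :
      beval b ρ = false → StepB eval beval (ρ, .bail b S K) (ρ, K)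

/-- Actions of the labeled-command target language. -/
inductive Act (Exp BExp : Type) : Type
  | skipA : Act Exp BExp
  | assignA : String → Exp → Act Exp BExp
  | testA : BExp → Bool → Act Exp BExp

/-- Labeled commands L : A → L'; labels are statements (via the injective
labeling l = id), with none playing the role of the undefined label ⊥. -/
structure Cmd (Exp BExp : Type) : Type where
  lbl : Stm Exp BExp
  act : Act Exp BExp
  suc : Option (Stm Exp BExp)

/-- Action semantics. -/
def Asem {Val Exp BExp : Type} (eval : Exp → (String → Val) → Val)
    (beval : BExp → (String → Val) → Bool) :
    Act Exp BExp → (String → Val) → Option (String → Val)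
  | .skipA, ρ => some ρ
  | .assignA x e, ρ => some (Function.update ρ x (eval e ρ))
  | .testA b pos, ρ => if beval b ρ = pos then some ρ else none

/-- The (generic) transition semantics of the labeled-command language. -/
def Strans {Val Exp BExp : Type} (eval : Exp → (String → Val) → Val)
    (beval : BExp → (String → Val) → Bool)
    (s s' : ((String → Val) × Cmd Exp BExp)) : Prop :=
  Asem eval beval s.2.act s.1 = some s'.1 ∧ s.2.suc = some s'.2.lbl

/-- The state compile function C^s, translating GP states to labeled-command
states (conditionals resolved by the truth value of the guard in the store). -/
def Cs {Val Exp BExp : Type} (eval : Exp → (String → Val) → Val)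
    (beval : BExp → (String → Val) → Bool) :
    (String → Val) × Stm Exp BExp → (String → Val) × Cmd Exp BExp
  | (ρ, .nil) => (ρ, ⟨.nil, .skipA, none⟩)
  | (ρ, .skipC K) => (ρ, ⟨.skipC K, .skipA, some K⟩)
  | (ρ, .assign x e K) => (ρ, ⟨.assign x e K, .assignA x e, some K⟩)
  | (ρ, .ite b S K) =>
      if beval b ρ then (ρ, ⟨.ite b S K, .testA b true, some (S.app K)⟩)
      else (ρ, ⟨.ite b S K, .testA b false, some K⟩)
  | (ρ, .whileC b S K) =>
      (ρ, ⟨.whileC b S K, .skipA, some (.ite b (S.app (.whileC b S .nil)) K)⟩)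
  | (ρ, .bail b S K) =>
      if beval b ρ then (ρ, ⟨.bail b S K, .testA b true, some S⟩)
      else (ρ, ⟨.bail b S K, .testA b false, some K⟩)

private lemma Cs_fst {Val Exp BExp : Type} (eval : Exp → (String → Val) → Val)
    (beval : BExp → (String → Val) → Bool) (ρ : String → Val) (S : Stm Exp BExp) :
    (Cs eval beval (ρ, S)).1 = ρ := by
  cases S <;> simp only [Cs] <;> split <;> rfl

private lemma Cs_lbl {Val Exp BExp : Type} (eval : Exp → (String → Val) → Val)
    (beval : BExp → (String → Val) → Bool) (ρ : String → Val) (S : Stm Exp BExp) :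
    (Cs eval beval (ρ, S)).2.lbl = S := by
  cases S <;> simp only [Cs] <;> split <;> rfl

private lemma Strans_Cs_iff {Val Exp BExp : Type} (eval : Exp → (String → Val) → Val)
    (beval : BExp → (String → Val) → Bool) (ρ ρ' : String → Val) (S S' : Stm Exp BExp) :
    Strans eval beval (Cs eval beval (ρ, S)) (Cs eval beval (ρ', S')) ↔
      Asem eval beval (Cs eval beval (ρ, S)).2.act ρ = some ρ' ∧
        (Cs eval beval (ρ, S)).2.suc = some S' := by
  unfold Strans
  rw [Cs_fst eval beval ρ S, Cs_fst eval beval ρ' S', Cs_lbl eval beval ρ' S']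

/-- The state compile function C^s is a functional bisimulation between the
Guo–Palsberg small-step semantics →_B and the transition semantics of the
labeled-command language. -/
theorem state_compile_functional_bisimulation {Val Exp BExp : Type}
    (eval : Exp → (String → Val) → Val) (beval : BExp → (String → Val) → Bool)
    (ρ ρ' : String → Val) (S S' : Stm Exp BExp) :
    StepB eval beval (ρ, S) (ρ', S') ↔
      Strans eval beval (Cs eval beval (ρ, S)) (Cs eval beval (ρ', S')) := by
  rw [Strans_Cs_iff]
  constructor
  · intro h
    cases h with
    | skip ρ K => simp [Strans, Cs, Asem, Cs_fst]
    | assign ρ x e K => simp [Strans, Cs, Asem, Cs_fst]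
    | iteT ρ b S K hb => simp [Strans, Cs, Asem, hb, Cs_fst]
    | iteF ρ b S K hb => simp [Strans, Cs, Asem, hb, Cs_fst]
    | whileU ρ b S K => simp [Strans, Cs, Asem, Cs_fst]
    | bailT ρ b S K hb => simp [Strans, Cs, Asem, hb, Cs_fst]
    | bailF ρ b S K hb => simp [Strans, Cs, Asem, hb, Cs_fst]
  · intro ⟨h1, h2⟩
    cases S with
    | nil => simp [Cs] at h2
    | skipC K =>
      simp [Cs, Asem] at h1 h2; subst h1; subst h2; exact .skip _ _
    | assign x e K =>
      simp [Cs, Asem] at h1 h2; subst h1; subst h2; exact .assign _ _ _ _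
    | ite b S K =>
      by_cases hb : beval b ρ
      · simp [Cs, Asem, hb] at h1 h2; subst h1; subst h2; exact .iteT _ _ _ _ hb
      · simp [Cs, Asem, hb] at h1 h2; subst h1; subst h2
        exact .iteF _ _ _ _ (by simpa using hb)
    | whileC b S K =>
      simp [Cs, Asem] at h1 h2; subst h1; subst h2; exact .whileU _ _ _ _
    | bail b S K =>
      by_cases hb : beval b ρ
      · simp [Cs, Asem, hb] at h1 h2; subst h1; subst h2; exact .bailT _ _ _ _ hb
      · simp [Cs, Asem, hb] at h1 h2; subst h1; subst h2
        exact .bailF _ _ _ _ (by simpa using hb)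
end
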